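/- For every positive integer n ≠ 2, the graph K₃ × K_n (the direct/tensor product of the complete graphs K₃ and K_n) admits a triangle decomposition. -/

import Mathlib

/-- The direct (tensor) product `K₃ × K_n` on `Fin 3 × Fin n`: vertices are adjacent iff
they differ in both coordinates. -/
def K3xKn (n : ℕ) : SimpleGraph (Fin 3 × Fin n) where
  Adj u v := u.1 ≠ v.1 ∧ u.2 ≠ v.2
  symm := ⟨fun _ _ h => ⟨h.1.symm, h.2.symm⟩⟩
  loopless := ⟨fun _ h => h.1 rfl⟩

/-- A triangle decomposition of a simple graph `G`: a set of 3-cliques such that every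
edge of `G` lies in exactly one of them. -/
def IsTriangleDecomp {V : Type*} (G : SimpleGraph V) (D : Set (Finset V)) : Prop :=
  (∀ t ∈ D, G.IsNClique 3 t) ∧
  ∀ u v, G.Adj u v → ∃! t, t ∈ D ∧ u ∈ t ∧ v ∈ t

/-!
An idempotent Latin square `L` of order `n` yields the decomposition: take the triangles
`{(0, i), (1, j), (2, L i j)}` for `i ≠ j`. Any two of `i`, `j`, `L i j` determine the cell
`(i, j)`, and idempotency makes the three entries distinct off the diagonal. For odd `n` the
square `L i j = (i + j) / 2` on `ZMod n` works; for even `n ≥ 4`, prolonging the one on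
`ZMod (n - 1)` along the transversal `{(x, x + 1)}`, whose entries `x + 1/2` are all distinct,
gives one of order `n`.
-/

open Function

structure IsIdempotentLatinSquare {V : Type*} (L : V → V → V) : Prop where
  idem : ∀ i, L i i = i
  row_injective : ∀ i, Injective (L i)
  col_injective : ∀ j, Injective (L · j)

def cellTriple {V : Type*} (L : V → V → V) (p : V × V) : Fin 3 → V := ![p.1, p.2, L p.1 p.2]

namespace IsIdempotentLatinSquare

variable {V W : Type*} {L : V → V → V}

theorem map_equiv (hL : IsIdempotentLatinSquare L) (e : V ≃ W) :
    IsIdempotentLatinSquare fun a b => e (L (e.symm a) (e.symm b)) where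
  idem a := by simp [hL.idem]
  row_injective a := e.injective.comp <| (hL.row_injective _).comp e.symm.injective
  col_injective b := e.injective.comp <| (hL.col_injective _).comp e.symm.injective

theorem cellTriple_injective (hL : IsIdempotentLatinSquare L) {p : V × V} (hp : p.1 ≠ p.2) :
    Injective (cellTriple L p) := by
  obtain ⟨i, j⟩ := p
  have hi : L i j ≠ i := fun h => hp ((hL.row_injective i) (h.trans (hL.idem i).symm)).symm
  have hj : L i j ≠ j := fun h => hp ((hL.col_injective j) (h.trans (hL.idem j).symm))
  intro a b hab
  fin_cases a <;> fin_cases b <;> simp_all [cellTriple, eq_comm]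

theorem cellTriple_pair_injective (hL : IsIdempotentLatinSquare L) {a b : Fin 3} (hab : a ≠ b) :
    Injective fun p => (cellTriple L p a, cellTriple L p b) := by
  have hrow {i j j'} (h : L i j = L i j') : j = j' := hL.row_injective i h
  have hcol {i i' j} (h : L i j = L i' j) : i = i' := hL.col_injective j h
  rintro ⟨i, j⟩ ⟨i', j'⟩ h
  fin_cases a <;> fin_cases b <;> simp [cellTriple] at h hab ⊢ <;> grind

theorem cellTriple_of_fst_eq_snd (hL : IsIdempotentLatinSquare L) {p : V × V} (hp : p.1 = p.2)
    (a : Fin 3) : cellTriple L p a = p.1 := by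
  fin_cases a <;> simp [cellTriple, hp, hL.idem]

end IsIdempotentLatinSquare

namespace K3xKn

variable {n : ℕ}

def triangle (v : Fin 3 → Fin n) : Finset (Fin 3 × Fin n) :=
  Finset.univ.image fun a => (a, v a)

@[simp]
theorem mem_triangle {v : Fin 3 → Fin n} {a : Fin 3} {x : Fin n} :
    (a, x) ∈ triangle v ↔ v a = x := by
  simp [triangle]

theorem isNClique_triangle {v : Fin 3 → Fin n} (hv : Injective v) :
    (K3xKn n).IsNClique 3 (triangle v) where
  isClique := by
    simp only [triangle, Finset.coe_image, Finset.coe_univ, Set.image_univ]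
    rintro _ ⟨a, rfl⟩ _ ⟨b, rfl⟩ hab
    have hab : a ≠ b := fun h => hab (h ▸ rfl)
    exact ⟨hab, hv.ne hab⟩
  card_eq := by
    rw [triangle, Finset.card_image_of_injective _ fun a b h => congrArg Prod.fst h]
    rfl

def latinTriangles (L : Fin n → Fin n → Fin n) : Set (Finset (Fin 3 × Fin n)) :=
  {t | ∃ p : Fin n × Fin n, p.1 ≠ p.2 ∧ triangle (cellTriple L p) = t}

theorem isTriangleDecomp_latinTriangles {L : Fin n → Fin n → Fin n}
    (hL : IsIdempotentLatinSquare L) : IsTriangleDecomp (K3xKn n) (latinTriangles L) := by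
  refine ⟨?_, ?_⟩
  · rintro _ ⟨p, hp, rfl⟩
    exact isNClique_triangle (hL.cellTriple_injective hp)
  · rintro ⟨a, x⟩ ⟨b, y⟩ ⟨hab, hxy : x ≠ y⟩
    have hbij := Finite.injective_iff_bijective.mp (hL.cellTriple_pair_injective hab)
    obtain ⟨p, hp⟩ := hbij.surjective (x, y)
    simp only [Prod.mk.injEq] at hp
    have hoff : p.1 ≠ p.2 := fun h => hxy <| by
      rw [← hp.1, ← hp.2, hL.cellTriple_of_fst_eq_snd h, hL.cellTriple_of_fst_eq_snd h]
    refine ⟨triangle (cellTriple L p), ⟨⟨p, hoff, rfl⟩, by simpa using hp⟩, ?_⟩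
    rintro _ ⟨⟨q, -, rfl⟩, hqa, hqb⟩
    rw [mem_triangle] at hqa hqb
    rw [hbij.injective (Prod.ext (hqa.trans hp.1.symm) (hqb.trans hp.2.symm))]

end K3xKn

section Prolongation

variable {V : Type*} [DecidableEq V]

/-- Prolongation along the transversal `{(x, σ x)}`: its symbols move to the new row and
column, and its cells receive the new symbol `none`. -/
def prolong (L : V → V → V) (σ : Equiv.Perm V) : Option V → Option V → Option V
  | some x, some y => if y = σ x then none else some (L x y)
  | some x, none => some (L x (σ x))
  | none, some y => some (L (σ.symm y) y)
  | none, none => none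

variable {L : V → V → V} {σ : Equiv.Perm V}

theorem prolong_some_left (x : V) :
    prolong L σ (some x) = Option.map (L x) ∘ Equiv.swap none (some (σ x)) := by
  funext y
  rcases y with _ | y
  · simp [prolong]
  · obtain rfl | hy := eq_or_ne y (σ x)
    · simp [prolong]
    · simp [prolong, hy, Equiv.swap_apply_of_ne_of_ne]

theorem prolong_some_right (y : V) :
    (prolong L σ · (some y)) = Option.map (L · y) ∘ Equiv.swap none (some (σ.symm y)) := by
  funext x
  rcases x with _ | x
  · simp [prolong]
  · obtain rfl | hx := eq_or_ne y (σ x)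
    · simp [prolong]
    · simp [prolong, hx, Equiv.swap_apply_of_ne_of_ne, Equiv.eq_symm_apply, hx.symm]

theorem prolong_none_left :
    prolong L σ none = Option.map ((fun x => L x (σ x)) ∘ σ.symm) := by
  funext y
  rcases y with _ | y <;> simp [prolong]

theorem prolong_none_right : (prolong L σ · none) = Option.map fun x => L x (σ x) := by
  funext x
  rcases x with _ | x <;> rfl

theorem IsIdempotentLatinSquare.prolong (hL : IsIdempotentLatinSquare L) (hσ : ∀ x, σ x ≠ x)
    (htr : Injective fun x => L x (σ x)) : IsIdempotentLatinSquare (prolong L σ) where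
  idem
    | none => rfl
    | some x => by simp [_root_.prolong, (hσ x).symm, hL.idem]
  row_injective
    | none => by
      rw [prolong_none_left]
      exact Option.map_injective (htr.comp σ.symm.injective)
    | some x => by
      rw [prolong_some_left]
      exact (Option.map_injective (hL.row_injective x)).comp (Equiv.injective _)
  col_injective
    | none => by
      rw [prolong_none_right]
      exact Option.map_injective htr
    | some y => by
      rw [prolong_some_right]
      exact (Option.map_injective (hL.col_injective y)).comp (Equiv.injective _)

end Prolongation

section Midpoint

variable {R V : Type*} [Ring R] [Invertible (2 : R)] [AddCommGroup V] [Module R V]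

theorem isIdempotentLatinSquare_midpoint : IsIdempotentLatinSquare (midpoint R : V → V → V) where
  idem := midpoint_self R
  row_injective x y y' h := by
    simpa [sub_eq_zero, eq_comm] using (midpoint_eq_midpoint_iff_vsub_eq_vsub R).mp h
  col_injective y x x' h := by
    simpa [sub_eq_zero] using (midpoint_eq_midpoint_iff_vsub_eq_vsub R).mp h

theorem isIdempotentLatinSquare_prolong_midpoint [DecidableEq V] {v : V} (hv : v ≠ 0) :
    IsIdempotentLatinSquare (prolong (midpoint R : V → V → V) (Equiv.addLeft v)) := by
  have htr : ∀ x : V, midpoint R x (v + x) = midpoint R 0 v + x := fun x => by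
    simpa using (midpoint_vadd_midpoint (R := R) (0 : V) v x x).symm
  refine isIdempotentLatinSquare_midpoint.prolong (fun x => by simpa using hv) ?_
  simpa [htr] using add_right_injective (midpoint R (0 : V) v)

end Midpoint

theorem ZMod.isUnit_two_of_odd {m : ℕ} (hm : Odd m) : IsUnit (2 : ZMod m) := by
  simpa using (ZMod.unitOfCoprime 2 (Nat.coprime_two_left.mpr hm)).isUnit

theorem exists_isIdempotentLatinSquare_fin {n : ℕ} (hn : 0 < n) (hn2 : n ≠ 2) :
    ∃ L : Fin n → Fin n → Fin n, IsIdempotentLatinSquare L := by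
  rcases Nat.even_or_odd n with heven | hodd
  · obtain ⟨m, rfl⟩ := Nat.exists_eq_add_one.mpr hn
    have hm : Odd m := by simpa [Nat.even_add_one] using heven
    have : Fact (1 < m) := ⟨by have := hm.pos; omega⟩
    let := (ZMod.isUnit_two_of_odd hm).invertible
    exact ⟨_, (isIdempotentLatinSquare_prolong_midpoint (R := ZMod m) one_ne_zero).map_equiv
      ((finSuccEquiv m).trans (ZMod.finEquiv m).toEquiv.optionCongr).symm⟩
  · have : NeZero n := ⟨hodd.pos.ne'⟩
    let := (ZMod.isUnit_two_of_odd hodd).invertible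
    exact ⟨_, (isIdempotentLatinSquare_midpoint (R := ZMod n)).map_equiv
      (ZMod.finEquiv n).toEquiv.symm⟩

/-- For every positive integer `n ≠ 2`, the graph `K₃ × K_n` admits a triangle
decomposition. -/
theorem K3xKn_triangle_decomp (n : ℕ) (hn : 0 < n) (hn2 : n ≠ 2) :
    ∃ D : Set (Finset (Fin 3 × Fin n)), IsTriangleDecomp (K3xKn n) D := by
  obtain ⟨L, hL⟩ := exists_isIdempotentLatinSquare_fin hn hn2
  exact ⟨_, K3xKn.isTriangleDecomp_latinTriangles hL⟩
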